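/- arXiv:2101.01913 — 4 statements merged into one kernel-verified Lean document; each statement's English description precedes it below -/
import Mathlib

section
/- Let E be a vector bundle of rank r and degree 0 on the projective line P^1 over an algebraically closed field of characteristic zero, equipped with a parabolic structure at points x in a finite set I, with weights 0 ≤ a_1(x) < ... < a_{σ_x}(x) < K. If (1/K)·Σ_{x∈I} a_{σ_x}(x) < 1/r and E is semistable as a parabolic bundle, then E is isomorphic to O_{P^1}^{⊕r} (i.e., E is homologically trivial). -/
/-!
If the splitting type is not zero, degree `0` forces a summand `O(d)` with `d ≥ 1`. As a line
subbundle its parabolic slope is at least `d ≥ 1`, whereas every weight is at most the top weight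
at its point, so `μ_par(E) ≤ (1/K) Σ_x a_{σ_x}(x) < 1/r ≤ 1`, contradicting semistability.
-/

open Finset

theorem Finset.sum_mul_le_mul_sum {ι R : Type*} [Semiring R] [PartialOrder R] [IsOrderedRing R]
    (s : Finset ι) {f g : ι → R} {M : R} (hf : ∀ i ∈ s, f i ≤ M) (hg : ∀ i ∈ s, 0 ≤ g i) :
    ∑ i ∈ s, f i * g i ≤ M * ∑ i ∈ s, g i := by
  rw [mul_sum]
  exact sum_le_sum fun i hi => mul_le_mul_of_nonneg_right (hf i hi) (hg i hi)

theorem parSlope_le_sum_top_weight {r n K : ℕ} (hr : 0 < r) {σ : Fin n → ℕ}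
    (hσ : ∀ x, 0 < σ x) {a : (x : Fin n) → Fin (σ x) → ℕ} (ha_mono : ∀ x, Monotone (a x))
    {nm : (x : Fin n) → Fin (σ x) → ℕ} (hnm : ∀ x, ∑ i, nm x i = r) :
    ((∑ x, ∑ i, (a x i : ℚ) * nm x i) / K) / r ≤
      (∑ x, (a x ⟨σ x - 1, Nat.sub_lt (hσ x) Nat.one_pos⟩ : ℚ)) / K := by
  rw [div_right_comm]
  refine div_le_div_of_nonneg_right ?_ K.cast_nonneg
  rw [div_le_iff₀ (by exact_mod_cast hr), sum_mul]
  refine sum_le_sum fun x _ => ?_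
  have hsum : ∑ i, (nm x i : ℚ) = r := by exact_mod_cast hnm x
  rw [← hsum]
  refine sum_mul_le_mul_sum _ (fun i _ => ?_) fun i _ => (nm x i).cast_nonneg
  exact_mod_cast ha_mono x (Fin.le_iff_val_le_val.mpr (Nat.le_sub_one_of_lt i.isLt))

theorem stmt0_general (r n K : ℕ)
    (σ : Fin n → ℕ) (hσ : ∀ x, 0 < σ x)
    (a : (x : Fin n) → Fin (σ x) → ℕ)
    (ha_mono : ∀ x, StrictMono (a x))
    (nm : (x : Fin n) → Fin (σ x) → ℕ)
    (hnm : ∀ x, ∑ i, nm x i = r)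
    (d : Fin r → ℤ) (hdeg : ∑ i, d i = 0)
    (hweight : (∑ x, (a x ⟨σ x - 1, Nat.sub_lt (hσ x) Nat.one_pos⟩ : ℚ)) / K < 1 / r)
    (hss : ∀ S : Finset (Fin r), S.Nonempty → S ≠ Finset.univ →
      ∃ nF : (x : Fin n) → Fin (σ x) → ℕ,
        (∀ x i, nF x i ≤ nm x i) ∧ (∀ x, ∑ i, nF x i = S.card) ∧
        ((∑ i ∈ S, (d i : ℚ)) + (∑ x, ∑ i, (a x i : ℚ) * nF x i) / K) / S.card ≤
          ((∑ x, ∑ i, (a x i : ℚ) * nm x i) / K) / r) :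
    ∀ i, d i = 0 := by
  intro i
  by_contra hi
  obtain ⟨i₀, -, hpos⟩ := exists_pos_of_sum_zero_of_exists_nonzero d hdeg ⟨i, mem_univ i, hi⟩
  have hproper : ({i₀} : Finset (Fin r)) ≠ univ := fun h => by
    rw [← h, sum_singleton] at hdeg
    omega
  obtain ⟨nF, -, -, hslope⟩ := hss {i₀} (singleton_nonempty i₀) hproper
  rw [card_singleton, sum_singleton, Nat.cast_one, div_one] at hslope
  have hlt : (d i₀ : ℚ) < 1 := calc
    (d i₀ : ℚ) ≤ d i₀ + (∑ x, ∑ j, (a x j : ℚ) * nF x j) / K :=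
      le_add_of_nonneg_right (by positivity)
    _ ≤ _ := hslope
    _ ≤ _ := parSlope_le_sum_top_weight i.pos hσ (fun x => (ha_mono x).monotone) hnm
    _ < 1 / r := hweight
    _ ≤ 1 := div_le_one_of_le₀ (by exact_mod_cast i.pos) r.cast_nonneg
  have : d i₀ < 1 := by exact_mod_cast hlt
  omega

/-- A rank `r`, degree `0` parabolic bundle on `P¹` (with splitting type `d` by Grothendieck's
theorem, marked points `x ∈ I` carrying flags with multiplicities `nm x i` and weights
`a x i < K`) which is parabolically semistable, under the weight condition
`(1/K) Σ_x a_{σ_x}(x) < 1/r`, is homologically trivial: all summands are `O_{P¹}`,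
i.e. `d i = 0` for all `i`.  Semistability is tested on subbundles (spanned by subsets `S` of
the line-bundle summands, with their induced parabolic structure `nF`). -/
theorem stmt0 (r n K : ℕ) (hr : 0 < r) (hn : 4 ≤ n) (hK : 0 < K)
    (σ : Fin n → ℕ) (hσ : ∀ x, 0 < σ x)
    (a : (x : Fin n) → Fin (σ x) → ℕ)
    (ha_mono : ∀ x, StrictMono (a x))
    (ha_lt : ∀ x i, a x i < K)
    (nm : (x : Fin n) → Fin (σ x) → ℕ)
    (hnm : ∀ x, ∑ i, nm x i = r)
    (d : Fin r → ℤ) (hdeg : ∑ i, d i = 0)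
    (hweight : (∑ x, (a x ⟨σ x - 1, Nat.sub_lt (hσ x) Nat.one_pos⟩ : ℚ)) / K < 1 / r)
    (hss : ∀ S : Finset (Fin r), S.Nonempty → S ≠ Finset.univ →
      ∃ nF : (x : Fin n) → Fin (σ x) → ℕ,
        (∀ x i, nF x i ≤ nm x i) ∧ (∀ x, ∑ i, nF x i = S.card) ∧
        ((∑ i ∈ S, (d i : ℚ)) + (∑ x, ∑ i, (a x i : ℚ) * nF x i) / K) / S.card ≤
          ((∑ x, ∑ i, (a x i : ℚ) * nm x i) / K) / r) :
    ∀ i, d i = 0 :=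
  stmt0_general r n K σ hσ a ha_mono nm hnm d hdeg hweight hss
end

section
/- Let E = O_{P^1}(−1) ⊕ O_{P^1}(1) with parabolic structure at four points x_1,...,x_4 given by the two-step flag E|_{x_i} ⊃ O_{P^1}(−1)|_{x_i} ⊃ 0 with weights a_1(x_i) = 0, a_2(x_i) = 1 and K = 2. Then E is a semistable parabolic bundle of degree 0 on P^1 that is not homologically trivial. -/
/-!
A sub-line-bundle `O(e) ⊂ O(-1) ⊕ O(1)` has `e ≤ 1`, and `e ≠ 0` because a section of `O(1)`
always vanishes somewhere on `P¹`. So either `e ≤ -1`, where even four flag conditions only add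
`4 · 1/2 = 2` to the slope, or `O(e) = O(1)` is the second summand, which meets no flag line
`O(-1)|_{p i}`.
-/

open MvPolynomial

namespace MvPolynomial

theorem IsHomogeneous.eval_eq_of_zero {σ R : Type*} [CommSemiring R] {f : MvPolynomial σ R}
    (hf : f.IsHomogeneous 0) (x y : σ → R) : eval x f = eval y f := by
  rw [← totalDegree_zero_iff_isHomogeneous, totalDegree_eq_zero_iff_eq_C] at hf
  rw [hf, eval_C, eval_C]

theorem IsHomogeneous.exists_eval_eq_zero_of_one {R : Type*} [CommRing R] [Nontrivial R]
    {f : MvPolynomial (Fin 2) R} (hf : f.IsHomogeneous 1) :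
    ∃ x y : R, ¬(x = 0 ∧ y = 0) ∧ eval ![x, y] f = 0 := by
  have hspan : f ∈ Submodule.span R (Set.range X) := by
    rw [← homogeneousSubmodule_one_eq_span_X]; exact hf
  obtain ⟨c, rfl⟩ := Submodule.mem_span_range_iff_exists_fun R |>.mp hspan
  by_cases hc : c 0 = 0 ∧ c 1 = 0
  · exact ⟨1, 0, by simp, by simp [Fin.sum_univ_two, hc.1, hc.2]⟩
  · refine ⟨c 1, -c 0, fun h => hc ⟨neg_eq_zero.mp h.2, h.1⟩, ?_⟩
    simp only [Fin.sum_univ_two, map_add, smul_eval, eval_X, Matrix.cons_val_zero,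
      Matrix.cons_val_one]
    ring

end MvPolynomial

section SubLineBundle

variable {k : Type*} [Field k]

/-- The pair `(v 0, v 1)` of sections of `O(-1 - e)` and `O(1 - e)`, homogeneous polynomials in
the coordinates of `P¹` (a negative-degree component is zero), has no common zero, i.e. it
embeds `O(e)` as a subbundle of `O(-1) ⊕ O(1)`. -/
structure IsSubLineBundle (e : ℤ) (v : Fin 2 → MvPolynomial (Fin 2) k) : Prop where
  isHomogeneous_fst : (v 0).IsHomogeneous (-1 - e).toNat
  fst_eq_zero : (-1 : ℤ) < e → v 0 = 0
  isHomogeneous_snd : (v 1).IsHomogeneous (1 - e).toNat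
  snd_eq_zero : (1 : ℤ) < e → v 1 = 0
  no_common_zero :
    ∀ x y : k, ¬(x = 0 ∧ y = 0) → ¬(eval ![x, y] (v 0) = 0 ∧ eval ![x, y] (v 1) = 0)

namespace IsSubLineBundle

variable {e : ℤ} {v : Fin 2 → MvPolynomial (Fin 2) k}

theorem eval_snd_ne_zero (hv : IsSubLineBundle e v) (he : -1 < e) {x y : k}
    (hxy : ¬(x = 0 ∧ y = 0)) : eval ![x, y] (v 1) ≠ 0 :=
  fun h => hv.no_common_zero x y hxy ⟨by rw [hv.fst_eq_zero he, map_zero], h⟩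

theorem le_neg_one_or_eq_one (hv : IsSubLineBundle e v) : e ≤ -1 ∨ e = 1 := by
  rcases (by omega : e ≤ -1 ∨ e = 0 ∨ e = 1 ∨ 1 < e) with he | rfl | he | he
  · exact Or.inl he
  · obtain ⟨x, y, hxy, hzero⟩ := IsHomogeneous.exists_eval_eq_zero_of_one hv.isHomogeneous_snd
    exact absurd hzero (hv.eval_snd_ne_zero (by norm_num) hxy)
  · exact Or.inr he
  · have h10 : ¬((1 : k) = 0 ∧ (0 : k) = 0) := by simp
    exact absurd (by rw [hv.snd_eq_zero he, map_zero]) (hv.eval_snd_ne_zero (by omega) h10)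

theorem eval_snd_ne_zero_of_eq_one (hv : IsSubLineBundle 1 v) (x : k × k) :
    eval ![x.1, x.2] (v 1) ≠ 0 := by
  rw [IsHomogeneous.eval_eq_of_zero hv.isHomogeneous_snd _ ![1, 0]]
  exact hv.eval_snd_ne_zero (by norm_num) (by simp)

end IsSubLineBundle

end SubLineBundle

open Classical in
theorem stmt3_general (k : Type*) [Field k]
    (p : Fin 4 → k × k) :
    (∀ (e : ℤ) (v : Fin 2 → MvPolynomial (Fin 2) k),
      (v 0).IsHomogeneous (-1 - e).toNat → ((-1 : ℤ) < e → v 0 = 0) →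
      (v 1).IsHomogeneous (1 - e).toNat → ((1 : ℤ) < e → v 1 = 0) →
      (∀ x y : k, ¬(x = 0 ∧ y = 0) →
        ¬(MvPolynomial.eval ![x, y] (v 0) = 0 ∧ MvPolynomial.eval ![x, y] (v 1) = 0)) →
      (e : ℚ) + (1 / 2) *
          (∑ i : Fin 4,
            if MvPolynomial.eval ![(p i).1, (p i).2] (v 1) = 0 then (1 : ℚ) else 0) ≤ 1)
    ∧ ¬(∀ i : Fin 2, (![(-1 : ℤ), 1]) i = 0) := by
  refine ⟨fun e v h0 h0' h1 h1' hv01 => ?_, fun h => by simpa using h 0⟩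
  have hv : IsSubLineBundle e v := ⟨h0, h0', h1, h1', hv01⟩
  rw [Finset.sum_boole]
  rcases hv.le_neg_one_or_eq_one with he | rfl
  · have hcard : ((Finset.univ.filter fun i => eval ![(p i).1, (p i).2] (v 1) = 0).card : ℚ)
        ≤ 4 := by exact_mod_cast Finset.card_le_univ _
    have he' : (e : ℚ) ≤ -1 := by exact_mod_cast he
    linarith
  · rw [Finset.filter_false_of_mem fun i _ => hv.eval_snd_ne_zero_of_eq_one (p i)]
    norm_num

open Classical in
/-- The bundle `E = O(-1) ⊕ O(1)` on `P¹` with parabolic structure at four points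
`[p i] ∈ P¹` given by the flag `E|_{p i} ⊃ O(-1)|_{p i} ⊃ 0`, weights `a₁ = 0`, `a₂ = 1`,
`K = 2`, is a semistable parabolic bundle of degree `0` which is not homologically trivial.
Semistability: every sub-line-bundle `O(e) ⊂ E`, encoded by a pair of homogeneous polynomials
`(v 0, v 1)` of degrees `-1 - e` and `1 - e` with no common zero on `P¹`, has parabolic slope
`e + (1/2) · #{i : the fiber of O(e) at p i lies in the flag line O(-1)|_{p i}}` at most
`μ_par(E) = 1`.  Non-triviality: the splitting type `(-1, 1)` of `E` is not `(0, 0)`. -/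
theorem stmt3 (k : Type*) [Field k] [IsAlgClosed k] [CharZero k]
    (p : Fin 4 → k × k) (hp0 : ∀ i, p i ≠ 0)
    (hpd : ∀ i j, i ≠ j → ∀ c : k, p i ≠ c • p j) :
    (∀ (e : ℤ) (v : Fin 2 → MvPolynomial (Fin 2) k),
      (v 0).IsHomogeneous (-1 - e).toNat → ((-1 : ℤ) < e → v 0 = 0) →
      (v 1).IsHomogeneous (1 - e).toNat → ((1 : ℤ) < e → v 1 = 0) →
      (∀ x y : k, ¬(x = 0 ∧ y = 0) →
        ¬(MvPolynomial.eval ![x, y] (v 0) = 0 ∧ MvPolynomial.eval ![x, y] (v 1) = 0)) →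
      (e : ℚ) + (1 / 2) *
          (∑ i : Fin 4,
            if MvPolynomial.eval ![(p i).1, (p i).2] (v 1) = 0 then (1 : ℚ) else 0) ≤ 1)
    ∧ ¬(∀ i : Fin 2, (![(-1 : ℤ), 1]) i = 0) :=
  stmt3_general k p
end

section
/- With the Poisson structure on Hom(V_1,V_2) ⊕ Hom(V_2,V_1) as above, the functions β_t(f, g) = Tr((f ∘ g)^t), t ≥ 1, are pairwise Poisson commutative: {β_t, β_{t'}} = 0 for all t, t'. -/
/-!
For each `i j`, bracketing with `H i j` acts on the entries of `H = F * G` as the commutator with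
the elementary matrix `E = single j i 1`. Since bracketing is a derivation, it then acts on
`H ^ k` as the commutator with `E` as well, so it kills `tr (H ^ k)`. Thus every `tr (H ^ k)` Poisson
commutes with all entries of `H`, hence with every trace of a power of `H`.
-/

open Matrix

namespace Matrix

variable {R A l m n : Type*} [CommSemiring R] [CommRing A] [Algebra R A]

theorem map_mul_derivation [Fintype m] (D : Derivation R A A) (M : Matrix l m A)
    (N : Matrix m n A) : (M * N).map D = M.map D * N + M * N.map D := by
  ext i j
  simp only [map_apply, mul_apply, add_apply, map_sum, Derivation.leibniz, smul_eq_mul,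
    ← Finset.sum_add_distrib]
  exact Finset.sum_congr rfl fun _ _ => by ring

variable [Fintype n] [DecidableEq n]

theorem map_pow_derivation_of_map_eq_lie (D : Derivation R A A) {E H : Matrix n n A}
    (hH : H.map D = ⁅E, H⁆) (k : ℕ) : (H ^ k).map D = ⁅E, H ^ k⁆ := by
  induction k with
  | zero =>
    rw [pow_zero, Ring.lie_def, mul_one, one_mul, sub_self]
    ext i j
    by_cases h : i = j <;> simp [h]
  | succ k ih =>
    rw [pow_succ, map_mul_derivation, ih, hH]
    simp only [Ring.lie_def]
    noncomm_ring

theorem derivation_trace_pow_eq_zero_of_map_eq_lie (D : Derivation R A A) {E H : Matrix n n A}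
    (hH : H.map D = ⁅E, H⁆) (k : ℕ) : D (H ^ k).trace = 0 := by
  rw [AddMonoidHom.map_trace D, map_pow_derivation_of_map_eq_lie D hH,
    LieAlgebra.matrix_trace_commutator_zero]

end Matrix

structure IsSkewBiderivation {A : Type*} [CommRing A] (B : A → A → A) : Prop where
  add_left : ∀ a b c, B (a + b) c = B a c + B b c
  skew : ∀ a b, B a b = -B b a
  leibniz : ∀ a b c, B a (b * c) = B a b * c + b * B a c

namespace IsSkewBiderivation

variable {A : Type*} [CommRing A] {B : A → A → A}

theorem add_right (hB : IsSkewBiderivation B) (a b c : A) : B a (b + c) = B a b + B a c := by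
  rw [hB.skew, hB.add_left, neg_add, ← hB.skew, ← hB.skew]

def derivation (hB : IsSkewBiderivation B) (a : A) : Derivation ℤ A A :=
  Derivation.mk' (AddMonoidHom.mk' (B a) (hB.add_right a)).toIntLinearMap fun b c => by
    simp only [AddMonoidHom.coe_toIntLinearMap, AddMonoidHom.mk'_apply, hB.leibniz, smul_eq_mul]
    ring

@[simp]
theorem derivation_apply (hB : IsSkewBiderivation B) (a b : A) : hB.derivation a b = B a b := rfl

theorem mul_left (hB : IsSkewBiderivation B) (a b c : A) :
    B (a * b) c = B a c * b + a * B b c := by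
  rw [hB.skew, hB.leibniz, hB.skew c, hB.skew c]
  ring

theorem sum_left (hB : IsSkewBiderivation B) {ι : Type*} (s : Finset ι) (f : ι → A) (c : A) :
    B (∑ i ∈ s, f i) c = ∑ i ∈ s, B (f i) c := by
  simp only [hB.skew _ c, ← hB.derivation_apply, map_sum, Finset.sum_neg_distrib]

variable {ι₁ ι₂ : Type*} [Fintype ι₁] [DecidableEq ι₁] [Fintype ι₂] [DecidableEq ι₂]
  {F : Matrix ι₂ ι₁ A} {G : Matrix ι₁ ι₂ A}

/-- The relations `{H_ij, H_kl} = δ_jk H_il − δ_li H_kj` for `H = F * G`, in matrix form. -/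
theorem map_mul_eq_lie_of_canonical (hB : IsSkewBiderivation B)
    (hFF : ∀ i k j l, B (F i j) (F k l) = 0) (hGG : ∀ i k j l, B (G i j) (G k l) = 0)
    (hGF : ∀ c d a b, B (G c d) (F a b) = if d = a ∧ c = b then 1 else 0) (i j : ι₂) :
    (F * G).map (hB.derivation ((F * G) i j)) = ⁅single j i (1 : A), F * G⁆ := by
  have hF : F.map (hB.derivation ((F * G) i j)) = single j i (1 : A) * F := by
    ext k l
    simp [mul_apply, hB.sum_left, hB.mul_left, hFF, hGF, single_apply, ite_and,
      Finset.sum_ite_eq, Finset.sum_ite_eq']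
  have hG : G.map (hB.derivation ((F * G) i j)) = -(G * single j i (1 : A)) := by
    ext k l
    simp [mul_apply, hB.sum_left, hB.mul_left, hGG, hB.skew (F _ _) (G _ _), hGF,
      single_apply, ite_and, Finset.sum_ite_eq, eq_comm]
  rw [map_mul_derivation, hF, hG, Ring.lie_def, Matrix.mul_neg, Matrix.mul_assoc, Matrix.mul_assoc,
    sub_eq_add_neg]

theorem bracket_trace_pow_eq_zero {n : Type*} [Fintype n] [DecidableEq n]
    (hB : IsSkewBiderivation B) {H : Matrix n n A} {x : A} (hx : ∀ i j, B (H i j) x = 0)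
    (k : ℕ) : B (H ^ k).trace x = 0 := by
  have hH : H.map (hB.derivation x) = ⁅(0 : Matrix n n A), H⁆ := by
    rw [Ring.lie_def, Matrix.zero_mul, Matrix.mul_zero, sub_self]
    ext i j
    simp [hB.skew _ (H i j), hx]
  rw [hB.skew, ← hB.derivation_apply, derivation_trace_pow_eq_zero_of_map_eq_lie _ hH k, neg_zero]

end IsSkewBiderivation

/-- With the canonical Poisson structure on `Hom(V₁,V₂) ⊕ Hom(V₂,V₁)`, the power traces
`β_t = Tr((f ∘ g)^t)` are pairwise Poisson commutative. -/
theorem stmt10 (A : Type*) [CommRing A]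
    (ι₁ ι₂ : Type*) [Fintype ι₁] [DecidableEq ι₁] [Fintype ι₂] [DecidableEq ι₂]
    (B : A → A → A)
    (haddl : ∀ a b c, B (a + b) c = B a c + B b c)
    (hskew : ∀ a b, B a b = - B b a)
    (hleib : ∀ a b c, B a (b * c) = B a b * c + b * B a c)
    (F : ι₂ → ι₁ → A) (G : ι₁ → ι₂ → A)
    (hFF : ∀ i k : ι₂, ∀ j l : ι₁, B (F i j) (F k l) = 0)
    (hGG : ∀ i k : ι₁, ∀ j l : ι₂, B (G i j) (G k l) = 0)
    (hGF : ∀ (c : ι₁) (d : ι₂) (a : ι₂) (b : ι₁),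
      B (G c d) (F a b) = if d = a ∧ c = b then 1 else 0)
    (H : Matrix ι₂ ι₂ A) (hH : ∀ i j, H i j = ∑ b, F i b * G b j) :
    ∀ t t' : ℕ, B ((H ^ t).trace) ((H ^ t').trace) = 0 := by
  intro t t'
  have hB : IsSkewBiderivation B := ⟨haddl, hskew, hleib⟩
  have hFG : H = Matrix.of F * Matrix.of G := by
    ext i j
    simp [hH, mul_apply]
  refine hB.bracket_trace_pow_eq_zero (fun i j => ?_) t
  subst hFG
  exact derivation_trace_pow_eq_zero_of_map_eq_lie (hB.derivation _)
    (hB.map_mul_eq_lie_of_canonical hFF hGG hGF i j) t'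
end

section
/- With the Poisson structure on Hom(V_1,V_2) ⊕ Hom(V_2,V_1) as above, the functions α_t(f, g) = Tr(Λ^t (f ∘ g)) (trace of the t-th exterior power, i.e., the t-th elementary symmetric function of the eigenvalues of f∘g) are pairwise Poisson commutative. -/
/-!
Bracketing with an entry of `H = F G` acts on the entries of `H` as the commutator with an
elementary matrix. For a derivation `D` with `D H = E H - H E`, the ring map `a ↦ a + D(a) ε`
into the dual numbers sends `H` to `(1 + ε E) H (1 - ε E)`, which has the same characteristic
polynomial as `H`; comparing `ε`-parts, `D` kills every coefficient of `charpoly H`. So these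
coefficients Poisson commute with all entries of `H`, and hence, by the same lemma with `E = 0`,
with each other.
-/

open Matrix Polynomial DualNumber TrivSqZeroExt

lemma Matrix.charpoly_add_eps_smul_commutator {n A : Type*} [Fintype n] [DecidableEq n]
    [CommRing A] (H E : Matrix n n A) :
    (H.map (inlHom A A) + (ε : A[ε]) • (E * H - H * E).map (inlHom A A)).charpoly
      = (H.map (inlHom A A)).charpoly := by
  set Hl := H.map (inlHom A A)
  set El := E.map (inlHom A A)
  set N := (ε : A[ε]) • El
  have hN : ∀ M, N * M * N = 0 := by
    intro M
    simp only [N, Matrix.smul_mul, Matrix.mul_smul, smul_smul, eps_mul_eps, zero_smul]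
  have hconj : Hl + (ε : A[ε]) • (E * H - H * E).map (inlHom A A) = (1 + N) * (Hl * (1 - N)) :=
    calc Hl + (ε : A[ε]) • (E * H - H * E).map (inlHom A A)
        = Hl + (N * Hl - Hl * N) := by
          rw [← RingHom.mapMatrix_apply, map_sub, map_mul, map_mul]
          simp only [N, Matrix.smul_mul, Matrix.mul_smul, smul_sub]
          rfl
      _ = (1 + N) * (Hl * (1 - N)) := by
          rw [← sub_zero (N * Hl), ← hN Hl]
          noncomm_ring
  have hinv : (1 - N) * (1 + N) = 1 :=
    calc (1 - N) * (1 + N) = 1 - N * 1 * N := by noncomm_ring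
      _ = 1 := by rw [hN, sub_zero]
  rw [hconj, charpoly_mul_comm, Matrix.mul_assoc, hinv, Matrix.mul_one]

namespace Derivation

variable {R A : Type*} [CommSemiring R] [CommRing A] [Algebra R A]

def toDualNumber (D : Derivation R A A) : A →+* A[ε] where
  toFun a := inl a + D a • ε
  map_one' := by simp
  map_mul' a b := by
    ext <;> simp [D.leibniz, mul_comm]
  map_zero' := by simp
  map_add' a b := by
    ext <;> simp

lemma map_charpoly_coeff_eq_zero {n : Type*} [Fintype n] [DecidableEq n] (D : Derivation R A A)
    {H : Matrix n n A} (E : Matrix n n A) (hD : ∀ i j, D (H i j) = (E * H - H * E) i j) (m : ℕ) :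
    D (H.charpoly.coeff m) = 0 := by
  have hmap : H.map D.toDualNumber
      = H.map (inlHom A A) + (ε : A[ε]) • (E * H - H * E).map (inlHom A A) := by
    ext i j : 1
    simp only [Matrix.map_apply, Matrix.add_apply, Matrix.smul_apply, toDualNumber,
      RingHom.coe_mk, MonoidHom.coe_mk, OneHom.coe_mk, hD]
    ext <;> simp
  have hcharpoly : H.charpoly.map D.toDualNumber = H.charpoly.map (inlHom A A) := by
    rw [← charpoly_map, ← charpoly_map, hmap, charpoly_add_eps_smul_commutator]
  simpa [toDualNumber] using congrArg (fun p => (p.coeff m).snd) hcharpoly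

lemma map_neg_one_pow_mul (D : Derivation R A A) (t : ℕ) (a : A) :
    D ((-1) ^ t * a) = (-1) ^ t * D a := by
  simp [D.leibniz, D.leibniz_pow]

end Derivation

section Bracket

variable {A : Type*} [CommRing A] {B : A → A → A}

lemma bracket_add_right (haddl : ∀ a b c, B (a + b) c = B a c + B b c)
    (hskew : ∀ a b, B a b = - B b a) (a b c : A) : B a (b + c) = B a b + B a c := by
  rw [hskew, haddl, hskew b a, hskew c a, neg_add, neg_neg, neg_neg]

lemma bracket_mul_left (hskew : ∀ a b, B a b = - B b a)
    (hleib : ∀ a b c, B a (b * c) = B a b * c + b * B a c) (a b c : A) :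
    B (a * b) c = B a c * b + a * B b c := by
  rw [hskew, hleib, hskew c a, hskew c b]
  ring

lemma bracket_sum_left (haddl : ∀ a b c, B (a + b) c = B a c + B b c) {ι : Type*}
    (s : Finset ι) (f : ι → A) (c : A) : B (∑ i ∈ s, f i) c = ∑ i ∈ s, B (f i) c :=
  map_sum (AddMonoidHom.mk' (B · c) fun a b => haddl a b c) f s

def bracketDerivation (hadd : ∀ a b c, B a (b + c) = B a b + B a c)
    (hleib : ∀ a b c, B a (b * c) = B a b * c + b * B a c) (x : A) : Derivation ℤ A A :=
  Derivation.mk' (AddMonoidHom.mk' (B x) (hadd x)).toIntLinearMap fun a b => by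
    simp [hleib]
    ring

@[simp]
lemma bracketDerivation_apply (hadd : ∀ a b c, B a (b + c) = B a b + B a c)
    (hleib : ∀ a b c, B a (b * c) = B a b * c + b * B a c) (x y : A) :
    bracketDerivation hadd hleib x y = B x y :=
  rfl

lemma bracket_mul_apply_mul_apply {ι₁ ι₂ : Type*} [Fintype ι₁] [DecidableEq ι₁] [Fintype ι₂]
    [DecidableEq ι₂]
    (haddl : ∀ a b c, B (a + b) c = B a c + B b c)
    (hskew : ∀ a b, B a b = - B b a)
    (hleib : ∀ a b c, B a (b * c) = B a b * c + b * B a c)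
    {F : Matrix ι₂ ι₁ A} {G : Matrix ι₁ ι₂ A}
    (hFF : ∀ i k : ι₂, ∀ j l : ι₁, B (F i j) (F k l) = 0)
    (hGG : ∀ i k : ι₁, ∀ j l : ι₂, B (G i j) (G k l) = 0)
    (hGF : ∀ (c : ι₁) (d : ι₂) (a : ι₂) (b : ι₁),
      B (G c d) (F a b) = if d = a ∧ c = b then 1 else 0) (k l r i : ι₂) :
    B ((F * G) k l) ((F * G) r i)
      = (single l k 1 * (F * G) - F * G * single l k 1 : Matrix ι₂ ι₂ A) r i := by
  have hFG : ∀ a b c d, B (F a b) (G c d) = - if d = a ∧ c = b then 1 else 0 := fun a b c d => by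
    rw [hskew, hGF]
  have hsum_right : ∀ c (s : Finset ι₁) (f : ι₁ → A), B c (∑ i ∈ s, f i) = ∑ i ∈ s, B c (f i) :=
    fun c s f => map_sum (bracketDerivation (bracket_add_right haddl hskew) hleib c) f s
  simp only [Matrix.mul_apply, bracket_sum_left haddl, hsum_right, bracket_mul_left hskew hleib,
    hleib, hFF, hGG, hGF, hFG]
  simp [Matrix.mul_apply, Matrix.single_apply, ite_and, eq_comm (a := k), neg_add_eq_sub]

end Bracket

/-- With the canonical Poisson structure on `Hom(V₁,V₂) ⊕ Hom(V₂,V₁)`, the power traces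
`α_t = Tr(Λ^t (f ∘ g))` (elementary symmetric functions of the eigenvalues) are pairwise Poisson commutative. -/
theorem stmt11 (A : Type*) [CommRing A]
    (ι₁ ι₂ : Type*) [Fintype ι₁] [DecidableEq ι₁] [Fintype ι₂] [DecidableEq ι₂]
    (B : A → A → A)
    (haddl : ∀ a b c, B (a + b) c = B a c + B b c)
    (hskew : ∀ a b, B a b = - B b a)
    (hleib : ∀ a b c, B a (b * c) = B a b * c + b * B a c)
    (F : ι₂ → ι₁ → A) (G : ι₁ → ι₂ → A)
    (hFF : ∀ i k : ι₂, ∀ j l : ι₁, B (F i j) (F k l) = 0)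
    (hGG : ∀ i k : ι₁, ∀ j l : ι₂, B (G i j) (G k l) = 0)
    (hGF : ∀ (c : ι₁) (d : ι₂) (a : ι₂) (b : ι₁),
      B (G c d) (F a b) = if d = a ∧ c = b then 1 else 0)
    (H : Matrix ι₂ ι₂ A) (hH : ∀ i j, H i j = ∑ b, F i b * G b j) :
    ∀ t t' : ℕ,
      B ((-1 : A) ^ t * H.charpoly.coeff (Fintype.card ι₂ - t))
        ((-1 : A) ^ t' * H.charpoly.coeff (Fintype.card ι₂ - t')) = 0 := by
  obtain rfl : H = of F * of G := by
    ext i j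
    rw [hH, Matrix.mul_apply]
    rfl
  have haddr := bracket_add_right haddl hskew
  set D := bracketDerivation haddr hleib
  have hcasimir : ∀ k l m, B ((of F * of G) k l) ((of F * of G).charpoly.coeff m) = 0 :=
    fun k l m => (D _).map_charpoly_coeff_eq_zero (single l k 1)
      (bracket_mul_apply_mul_apply haddl hskew hleib hFF hGG hGF k l) m
  intro t t'
  set u := (-1 : A) ^ t * (of F * of G).charpoly.coeff (Fintype.card ι₂ - t)
  have hu : ∀ k l, B u ((of F * of G) k l) = 0 := fun k l => by
    rw [hskew, ← bracketDerivation_apply haddr hleib, Derivation.map_neg_one_pow_mul,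
      bracketDerivation_apply, hcasimir, mul_zero, neg_zero]
  rw [← bracketDerivation_apply haddr hleib, Derivation.map_neg_one_pow_mul,
    (D u).map_charpoly_coeff_eq_zero 0 (by simpa [D] using hu), mul_zero]
end
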